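/- If X is an infinite subset of ℕ and F : [ℕ]^e → c is a coloring such that every finite restriction of F belongs to a tree of 'good' colorings (colorings with no large homogeneous set of cardinality ≥ k), then taking an infinite homogeneous set Y for F (by the infinite Ramsey theorem) and a finite large subset X₀ ⊆ Y with |X₀| ≥ k yields a contradiction. Formal statement: for all k, e, c, there is no coloring F : [ℕ]^e → c such that no finite large subset of ℕ of cardinality ≥ k is homogeneous for F. -/

import Mathlib

/-- `Y` is homogeneous for the coloring `F` on `e`-element subsets. -/
def Homog {c : ℕ} (F : Finset ℕ → Fin c) (e : ℕ) (Y : Finset ℕ) : Prop :=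
  ∀ s ⊆ Y, ∀ t ⊆ Y, s.card = e → t.card = e → F s = F t

/-!
Infinite Ramsey theorem, by induction on `e`. Given an infinite set, fix one of its points `a`
and apply the induction hypothesis to the coloring `s ↦ F (insert a s)` on the points beyond `a`;
iterating this yields `a₀ < a₁ < ⋯` such that the color of an `(e+1)`-set with least element `aₙ`
drawn from the sequence depends only on `n`. By pigeonhole infinitely many `n` share a color, and
those `aₙ` form an infinite homogeneous set. Any finite subset of it, containing some point `m`
and at least `max k m` points, is a large homogeneous set of size at least `k`.
-/

open Set

variable {α : Type*}

def IsMonochromaticOn (F : Finset ℕ → α) (e : ℕ) (T : Set ℕ) : Prop :=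
  ∃ i, ∀ s : Finset ℕ, ↑s ⊆ T → s.card = e → F s = i

lemma isMonochromaticOn_zero (F : Finset ℕ → α) (T : Set ℕ) : IsMonochromaticOn F 0 T :=
  ⟨F ∅, fun s _ hs => by rw [Finset.card_eq_zero.mp hs]⟩

lemma exists_lt_isMonochromaticOn_insert {e : ℕ}
    (ih : ∀ (G : Finset ℕ → α) (S : Set ℕ), S.Infinite →
      ∃ T ⊆ S, T.Infinite ∧ IsMonochromaticOn G e T)
    (F : Finset ℕ → α) {U : Set ℕ} (hU : U.Infinite) :
    ∃ a ∈ U, ∃ U' ⊆ U, U'.Infinite ∧ (∀ x ∈ U', a < x) ∧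
      IsMonochromaticOn (fun s => F (insert a s)) e U' := by
  obtain ⟨a, ha⟩ := hU.nonempty
  obtain ⟨U', hU'sub, hU', hmono⟩ :=
    ih (fun s => F (insert a s)) (U \ Iic a) (hU.sdiff (finite_Iic a))
  exact ⟨a, ha, U', fun x hx => (hU'sub hx).1, hU', fun x hx => not_le.mp (hU'sub hx).2, hmono⟩

lemma exists_strictMono_color_insert {e : ℕ}
    (ih : ∀ (G : Finset ℕ → α) (S : Set ℕ), S.Infinite →
      ∃ T ⊆ S, T.Infinite ∧ IsMonochromaticOn G e T)
    (F : Finset ℕ → α) {S : Set ℕ} (hS : S.Infinite) :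
    ∃ (a : ℕ → ℕ) (col : ℕ → α), range a ⊆ S ∧ StrictMono a ∧
      ∀ n (s : Finset ℕ), ↑s ⊆ a '' Ioi n → s.card = e → F (insert (a n) s) = col n := by
  have step : ∀ U : {U : Set ℕ // U.Infinite}, ∃ a ∈ U.1, ∃ U' : {U' : Set ℕ // U'.Infinite},
      U'.1 ⊆ U.1 ∧ (∀ x ∈ U'.1, a < x) ∧
      ∃ i : α, ∀ s : Finset ℕ, ↑s ⊆ U'.1 → s.card = e → F (insert a s) = i := fun U => by
    obtain ⟨a, ha, U', hsub, hU', hlt, hmono⟩ := exists_lt_isMonochromaticOn_insert ih F U.2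
    exact ⟨a, ha, ⟨U', hU'⟩, hsub, hlt, hmono⟩
  choose head head_mem next next_sub head_lt col hcol using step
  let V : ℕ → {U : Set ℕ // U.Infinite} := fun n => next^[n] ⟨S, hS⟩
  have hV_succ : ∀ n, V (n + 1) = next (V n) := fun n => Function.iterate_succ_apply' _ _ _
  have hV_anti : Antitone fun n => (V n).1 :=
    antitone_nat_of_succ_le fun n => by rw [hV_succ]; exact next_sub _
  have head_mem_next : ∀ n m, n < m → head (V m) ∈ (next (V n)).1 := fun n m h => by
    rw [← hV_succ]; exact hV_anti h (head_mem _)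
  refine ⟨fun n => head (V n), fun n => col (V n), ?_,
    fun n m h => head_lt _ _ (head_mem_next n m h), ?_⟩
  · rintro _ ⟨n, rfl⟩
    exact hV_anti (Nat.zero_le n) (head_mem _)
  · intro n s hs hcard
    exact hcol _ s (hs.trans (by rintro _ ⟨m, hm, rfl⟩; exact head_mem_next n m hm)) hcard

theorem infinite_ramsey [Finite α] (e : ℕ) (F : Finset ℕ → α) {S : Set ℕ} (hS : S.Infinite) :
    ∃ T ⊆ S, T.Infinite ∧ IsMonochromaticOn F e T := by
  induction e generalizing F S with
  | zero => exact ⟨S, subset_rfl, hS, isMonochromaticOn_zero F S⟩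
  | succ e ih =>
    obtain ⟨a, col, ha_mem, ha_mono, hcol⟩ :=
      exists_strictMono_color_insert (fun G S hS => ih G hS) F hS
    obtain ⟨i, hi⟩ := Finite.exists_infinite_fiber col
    refine ⟨a '' (col ⁻¹' {i}), (image_subset_range _ _).trans ha_mem,
      (infinite_coe_iff.mp hi).image ha_mono.injective.injOn, i, fun s hs hcard => ?_⟩
    have hne : s.Nonempty := Finset.card_pos.mp (by omega)
    obtain ⟨n, hn, hmin⟩ := hs (s.min'_mem hne)
    have hrest : ↑(s.erase (s.min' hne)) ⊆ a '' Ioi n := by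
      intro x hx
      have hxs := Finset.mem_of_mem_erase hx
      obtain ⟨m, -, rfl⟩ := hs hxs
      refine ⟨m, ha_mono.lt_iff_lt.mp ?_, rfl⟩
      rw [hmin]
      exact lt_of_le_of_ne (s.min'_le _ hxs) (Finset.ne_of_mem_erase hx).symm
    have hcard' : (s.erase (s.min' hne)).card = e := by
      rw [Finset.card_erase_of_mem (s.min'_mem hne)]; omega
    have := hcol n _ hrest hcard'
    rwa [hmin, Finset.insert_erase (s.min'_mem hne), hn] at this

lemma IsMonochromaticOn.homog {c e : ℕ} {F : Finset ℕ → Fin c} {T : Set ℕ}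
    (h : IsMonochromaticOn F e T) {Y : Finset ℕ} (hY : ↑Y ⊆ T) : Homog F e Y := by
  obtain ⟨i, hi⟩ := h
  intro s hs t ht hse hte
  rw [hi s ((Finset.coe_subset.mpr hs).trans hY) hse, hi t ((Finset.coe_subset.mpr ht).trans hY) hte]

lemma Set.Infinite.exists_large_finset_subset {T : Set ℕ} (hT : T.Infinite) (k : ℕ) :
    ∃ Y : Finset ℕ, ↑Y ⊆ T ∧ k ≤ Y.card ∧ Y.min ≤ (Y.card : WithBot ℕ) := by
  obtain ⟨m, hm⟩ := hT.nonempty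
  obtain ⟨Z, hZT, hZcard⟩ := hT.exists_subset_card_eq (max k m)
  have hcard : max k m ≤ (insert m Z).card := hZcard ▸ Finset.card_le_card (Finset.subset_insert _ _)
  refine ⟨insert m Z, ?_, (le_max_left k m).trans hcard, ?_⟩
  · rw [Finset.coe_insert]
    exact insert_subset hm hZT
  · exact (Finset.min_le (Finset.mem_insert_self _ _)).trans
      (WithBot.coe_le_coe.mpr ((le_max_right k m).trans hcard))

/-- Truth of the (infinitary form of the) Paris–Harrington statement: for all
`k, e, c` there is no coloring `F : [ℕ]^e → c` such that no finite large subset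
of `ℕ` of cardinality at least `k` is homogeneous for `F`. -/
theorem stmt10 (k e c : ℕ) :
    ¬ ∃ F : Finset ℕ → Fin c,
        ∀ Y : Finset ℕ, k ≤ Y.card → Y.min ≤ (Y.card : WithBot ℕ) → ¬ Homog F e Y := by
  rintro ⟨F, hF⟩
  obtain ⟨T, -, hT, hmono⟩ := infinite_ramsey e F infinite_univ
  obtain ⟨Y, hYT, hk, hlarge⟩ := hT.exists_large_finset_subset k
  exact hF Y hk hlarge (hmono.homog hYT)
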